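/- Let (A_n)_{n=0}^∞ be an increasing sequence of finite nonempty alphabets with union A, let k ∈ ℕ, let E ⊆ W(A), and let 𝐬 = (s_n(x))_{n=0}^∞ be an infinite sequence of variable words over A such that E is k-large in 𝐬. Then there exist m ∈ ℕ and a variable word w(x) ∈ ⟨(s_n(x))_{n=0}^m ∥ (A_{k+n})_{n=0}^m⟩_v such that {w(a) : a ∈ A_k} ⊆ E. -/

import Mathlib

/- Words over an alphabet are `List α`.  The variable symbol `x` is modelled by
`none : Option α`, and variable words are lists over `Option α` containing `none`. -/

namespace HJ

variable {α : Type*}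

/-- Substitution of the letter `a` for every occurrence of the variable in a
variable word, producing a constant word. -/
def substC (s : List (Option α)) (a : α) : List α :=
  s.map (fun b => b.getD a)

/-- Substitution of `b ∈ A ∪ {x}` (a letter `some a` or the variable `none`)
for every occurrence of the variable. -/
def substV (s : List (Option α)) (b : Option α) : List (Option α) :=
  s.map (fun c => Option.elim c b some)

/-- `s` is a variable word over the alphabet `S`: all its letters lie in `S`
and it contains at least one occurrence of the variable. -/
def IsVarWord (S : Set α) (s : List (Option α)) : Prop :=
  (∀ a : α, some a ∈ s → a ∈ S) ∧ none ∈ s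

/-- `W(S)`: the set of (constant) words over the alphabet `S`. -/
def WordsOver (S : Set α) : Set (List α) :=
  { w | ∀ a ∈ w, a ∈ S }

/-- The constant span of the sequence `s` of variable words, with indices
restricted to `I` and the letter substituted at position `l i` taken from the
alphabet `B (l i)`: all concatenations `s_{l_0}(a_0) ⋯ s_{l_n}(a_n)` with
`l_0 < ⋯ < l_n` in `I` and `a_i ∈ B (l_i)`. -/
def constSpan (B : ℕ → Set α) (s : ℕ → List (Option α)) (I : Set ℕ) :
    Set (List α) :=
  { w | ∃ (n : ℕ) (l : Fin (n + 1) → ℕ) (a : Fin (n + 1) → α),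
      StrictMono l ∧ (∀ i, l i ∈ I) ∧ (∀ i, a i ∈ B (l i)) ∧
      w = (List.ofFn fun i => substC (s (l i)) (a i)).flatten }

/-- The variable span of the sequence `s` of variable words, with indices
restricted to `I` and alphabets given by `B`: all concatenations
`s_{l_0}(b_0) ⋯ s_{l_n}(b_n)` with `l_0 < ⋯ < l_n` in `I` and
`b_i ∈ B (l_i) ∪ {x}` which contain at least one occurrence of the variable. -/
def varSpan (B : ℕ → Set α) (s : ℕ → List (Option α)) (I : Set ℕ) :
    Set (List (Option α)) :=
  { w | ∃ (n : ℕ) (l : Fin (n + 1) → ℕ) (b : Fin (n + 1) → Option α),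
      StrictMono l ∧ (∀ i, l i ∈ I) ∧
      (∀ i, ∀ a : α, b i = some a → a ∈ B (l i)) ∧
      none ∈ w ∧
      w = (List.ofFn fun i => substV (s (l i)) (b i)).flatten }

/-- `(t_0, …, t_l)` is a finite extracted subsequence of `s` (with alphabets `B`):
there are `0 = m_0 < m_1 < ⋯` with `t_i` in the variable span of
`(s_n)_{n = m_i}^{m_{i+1} - 1}` (with alphabets `B`) for all `i ≤ l`. -/
def ExtractedFin (B : ℕ → Set α) (s t : ℕ → List (Option α)) (l : ℕ) : Prop :=
  ∃ m : ℕ → ℕ, m 0 = 0 ∧ StrictMono m ∧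
    ∀ i ≤ l, t i ∈ varSpan B s (Set.Ico (m i) (m (i + 1)))

/-- `t` is an infinite extracted subsequence of `s` (with alphabets `B`). -/
def Extracted (B : ℕ → Set α) (s t : ℕ → List (Option α)) : Prop :=
  ∀ l : ℕ, ExtractedFin B s t l

/-- `E` is large in `s` (with alphabets `B`): `E` meets the constant span of
every infinite extracted subsequence of `s`. -/
def IsLarge (B : ℕ → Set α) (E : Set (List α)) (s : ℕ → List (Option α)) : Prop :=
  ∀ w : ℕ → List (Option α), Extracted B s w →
    (E ∩ constSpan B w Set.univ).Nonempty

/-- `E_F = {z ∈ W(S) : w ++ z ∈ E for every w ∈ F}`. -/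
def wordQuot (S : Set α) (E F : Set (List α)) : Set (List α) :=
  { z | z ∈ WordsOver S ∧ ∀ w ∈ F, w ++ z ∈ E }

end HJ

/-!
Suppose that no variable word over an initial segment of `s` works. We then build an extracted
subsequence `t₀, t₁, …` of `s` whose constant span misses `E`, contradicting largeness. Along with
`t` we keep the finite set `Pₙ` consisting of `[]` and the constant words of `t₀, …, tₙ₋₁`, none of
which lies in `E`. The next word `tₙ` comes from the Hales–Jewett theorem over `A_{k+n}`, colouring
a word `w` by the set of those `u ∈ Pₙ` with `u ++ w ∈ E`. If `u ++ tₙ(a) ∈ E` for one letter `a`,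
then by monochromaticity this holds for every letter, and `u ++ tₙ` would be a variable word of the
forbidden kind. So every `u ++ tₙ(a)` avoids `E`, and the invariant is preserved.
-/

theorem Combinatorics.Line.exists_mono_in_high_dimension_fin (α κ : Type*) [Finite α]
    [Finite κ] : ∃ n, ∀ C : (Fin n → α) → κ, ∃ l : Line α (Fin n), l.IsMono C := by
  obtain ⟨ι, _, hι⟩ := exists_mono_in_high_dimension α κ
  refine ⟨Fintype.card ι, fun C => ?_⟩
  obtain ⟨l, c, hc⟩ := hι fun v => C (v ∘ (Fintype.equivFin ι).symm)
  obtain ⟨i, hi⟩ := l.proper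
  exact ⟨⟨l.idxFun ∘ (Fintype.equivFin ι).symm, Fintype.equivFin ι i, by simpa using hi⟩, c, hc⟩

namespace HJ

variable {α : Type*}

theorem substV_none (t : List (Option α)) : substV t none = t := by
  conv_rhs => rw [← List.map_id t]
  exact List.map_congr_left fun c _ => by cases c <;> rfl

theorem map_some_substC (t : List (Option α)) (a : α) :
    (substC t a).map some = substV t (some a) := by
  simp only [substC, substV, List.map_map]
  exact List.map_congr_left fun c _ => by cases c <;> rfl

theorem substC_substV (t : List (Option α)) (b : Option α) (a : α) :
    substC (substV t b) a = substC t (b.getD a) := by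
  simp only [substC, substV, List.map_map]
  exact List.map_congr_left fun c _ => by cases c <;> cases b <;> rfl

theorem substC_append (u v : List (Option α)) (a : α) :
    substC (u ++ v) a = substC u a ++ substC v a :=
  List.map_append

theorem substC_map_some (u : List α) (a : α) : substC (u.map some) a = u := by
  simp [substC, List.map_map, Function.comp_def]

theorem substC_flatten (L : List (List (Option α))) (a : α) :
    substC L.flatten a = (L.map (substC · a)).flatten :=
  List.map_flatten

theorem exists_ofFn_flatten_iff_exists_list {β γ : Type*} (g : ℕ → β → List γ)
    (Q : ℕ → β → Prop) (w : List γ) :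
    (∃ (n : ℕ) (l : Fin (n + 1) → ℕ) (b : Fin (n + 1) → β), StrictMono l ∧
      (∀ i, Q (l i) (b i)) ∧ w = (List.ofFn fun i => g (l i) (b i)).flatten) ↔
    ∃ L : List (ℕ × β), L ≠ [] ∧ L.Pairwise (fun p q => p.1 < q.1) ∧ (∀ p ∈ L, Q p.1 p.2) ∧
      w = (L.map fun p => g p.1 p.2).flatten := by
  constructor
  · rintro ⟨n, l, b, hl, hQ, rfl⟩
    refine ⟨List.ofFn fun i => (l i, b i), by simp, ?_, ?_, by simp [List.map_ofFn, Function.comp_def]⟩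
    · exact List.pairwise_ofFn.2 fun i j hij => hl hij
    · exact List.forall_mem_ofFn_iff.2 hQ
  · rintro ⟨L, hL, hsorted, hQ, rfl⟩
    obtain ⟨n, f, rfl⟩ : ∃ (n : ℕ) (f : Fin (n + 1) → ℕ × β), L = List.ofFn f := by
      obtain ⟨p, L, rfl⟩ := List.exists_cons_of_ne_nil hL
      exact ⟨L.length, (p :: L).get, (List.ofFn_get _).symm⟩
    refine ⟨n, fun i => (f i).1, fun i => (f i).2, fun i j hij => ?_, fun i => ?_, ?_⟩
    · exact List.pairwise_ofFn.1 hsorted hij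
    · exact List.forall_mem_ofFn_iff.1 hQ i
    · simp [List.map_ofFn, Function.comp_def]

section Spans

variable {B : ℕ → Set α} {s : ℕ → List (Option α)} {I J : Set ℕ}

theorem mem_constSpan_iff {w : List α} :
    w ∈ constSpan B s I ↔ ∃ L : List (ℕ × α), L ≠ [] ∧ L.Pairwise (fun p q => p.1 < q.1) ∧
      (∀ p ∈ L, p.1 ∈ I ∧ p.2 ∈ B p.1) ∧ w = (L.map fun p => substC (s p.1) p.2).flatten := by
  refine Iff.trans ?_ (exists_ofFn_flatten_iff_exists_list (fun j a => substC (s j) a)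
    (fun j a => j ∈ I ∧ a ∈ B j) w)
  simp only [constSpan, Set.mem_ofPred_eq, forall_and, and_assoc]

theorem mem_varSpan_iff {w : List (Option α)} :
    w ∈ varSpan B s I ↔ none ∈ w ∧ ∃ L : List (ℕ × Option α), L ≠ [] ∧
      L.Pairwise (fun p q => p.1 < q.1) ∧
      (∀ p ∈ L, p.1 ∈ I ∧ ∀ a : α, p.2 = some a → a ∈ B p.1) ∧
      w = (L.map fun p => substV (s p.1) p.2).flatten := by
  rw [← exists_ofFn_flatten_iff_exists_list (fun j b => substV (s j) b)
    (fun j b => j ∈ I ∧ ∀ a : α, b = some a → a ∈ B j) w]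
  simp only [varSpan, Set.mem_ofPred_eq, forall_and]
  constructor
  · rintro ⟨n, l, b, hl, hI, hB, hw, rfl⟩
    exact ⟨hw, n, l, b, hl, ⟨hI, hB⟩, rfl⟩
  · rintro ⟨hw, n, l, b, hl, ⟨hI, hB⟩, rfl⟩
    exact ⟨n, l, b, hl, hI, hB, hw, rfl⟩

theorem constSpan_mono (hIJ : I ⊆ J) : constSpan B s I ⊆ constSpan B s J :=
  fun _ ⟨n, l, a, hl, hI, hB, hw⟩ => ⟨n, l, a, hl, fun i => hIJ (hI i), hB, hw⟩

theorem varSpan_mono (hIJ : I ⊆ J) : varSpan B s I ⊆ varSpan B s J :=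
  fun _ ⟨n, l, b, hl, hI, hB, hw⟩ => ⟨n, l, b, hl, fun i => hIJ (hI i), hB, hw⟩

theorem append_mem_constSpan {u v : List α} (hu : u ∈ constSpan B s I)
    (hv : v ∈ constSpan B s J) (hIJ : ∀ i ∈ I, ∀ j ∈ J, i < j) :
    u ++ v ∈ constSpan B s (I ∪ J) := by
  obtain ⟨L₁, hL₁, hs₁, hc₁, rfl⟩ := mem_constSpan_iff.1 hu
  obtain ⟨L₂, -, hs₂, hc₂, rfl⟩ := mem_constSpan_iff.1 hv
  refine mem_constSpan_iff.2 ⟨L₁ ++ L₂, by simp [hL₁], ?_, ?_, by simp⟩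
  · exact List.pairwise_append.2
      ⟨hs₁, hs₂, fun p hp q hq => hIJ _ (hc₁ p hp).1 _ (hc₂ q hq).1⟩
  · simp only [List.mem_append]
    rintro p (hp | hp)
    · exact ⟨Or.inl (hc₁ p hp).1, (hc₁ p hp).2⟩
    · exact ⟨Or.inr (hc₂ p hp).1, (hc₂ p hp).2⟩

theorem map_some_append_mem_varSpan {u : List α} {v : List (Option α)}
    (hu : u ∈ constSpan B s I) (hv : v ∈ varSpan B s J) (hIJ : ∀ i ∈ I, ∀ j ∈ J, i < j) :
    u.map some ++ v ∈ varSpan B s (I ∪ J) := by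
  obtain ⟨L₁, hL₁, hs₁, hc₁, rfl⟩ := mem_constSpan_iff.1 hu
  obtain ⟨hnone, L₂, -, hs₂, hc₂, rfl⟩ := mem_varSpan_iff.1 hv
  refine mem_varSpan_iff.2 ⟨List.mem_append_right _ hnone,
    L₁.map (fun p => (p.1, some p.2)) ++ L₂, by simp [hL₁], ?_, ?_, ?_⟩
  · refine List.pairwise_append.2 ⟨List.pairwise_map.2 hs₁, hs₂, ?_⟩
    simp only [List.mem_map]
    rintro _ ⟨p, hp, rfl⟩ q hq
    exact hIJ _ (hc₁ p hp).1 _ (hc₂ q hq).1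
  · intro p hp
    rcases List.mem_append.1 hp with hp | hp
    · obtain ⟨q, hq, rfl⟩ := List.mem_map.1 hp
      exact ⟨Or.inl (hc₁ q hq).1, fun a ha => Option.some_injective _ ha ▸ (hc₁ q hq).2⟩
    · exact ⟨Or.inr (hc₂ p hp).1, (hc₂ p hp).2⟩
  · simp [List.map_flatten, Function.comp_def, map_some_substC]

theorem substC_mem_constSpan {v : List (Option α)} {a : α} (hv : v ∈ varSpan B s J)
    (ha : ∀ j ∈ J, a ∈ B j) : substC v a ∈ constSpan B s J := by
  obtain ⟨-, L, hL, hsorted, hc, rfl⟩ := mem_varSpan_iff.1 hv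
  refine mem_constSpan_iff.2 ⟨L.map fun p => (p.1, p.2.getD a), by simpa using hL,
    List.pairwise_map.2 hsorted, ?_, ?_⟩
  · simp only [List.mem_map]
    rintro _ ⟨p, hp, rfl⟩
    refine ⟨(hc p hp).1, ?_⟩
    cases hb : p.2 with
    | none => exact ha _ (hc p hp).1
    | some b => exact (hc p hp).2 b hb
  · simp [substC_flatten, substC_substV, Function.comp_def]

theorem ne_nil_of_mem_constSpan (hs : ∀ j, s j ≠ []) {w : List α}
    (hw : w ∈ constSpan B s I) : w ≠ [] := by
  obtain ⟨L, hL, -, -, rfl⟩ := mem_constSpan_iff.1 hw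
  obtain ⟨p, L, rfl⟩ := List.exists_cons_of_ne_nil hL
  rw [List.map_cons, List.flatten_cons]
  exact List.append_ne_nil_of_left_ne_nil (by simpa [substC] using hs p.1) _

end Spans

open Combinatorics in
theorem exists_varSpan_substC_mono {B : ℕ → Set α} {s : ℕ → List (Option α)} (S : Finset α)
    {start : ℕ} (hSB : ∀ j ≥ start, (S : Set α) ⊆ B j) (hs : ∀ j, none ∈ s j)
    {κ : Type*} [Finite κ] (col : List α → κ) :
    ∃ M, start < M ∧ ∃ v ∈ varSpan B s (Set.Ico start M),
      ∀ a ∈ S, ∀ b ∈ S, col (substC v a) = col (substC v b) := by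
  -- The cube `Fin n → S` encodes the letters put into the blocks `s start, …, s (start + n - 1)`.
  obtain ⟨n, hn⟩ := Line.exists_mono_in_high_dimension_fin S κ
  obtain ⟨l, c, hc⟩ := hn fun x => col (List.ofFn fun i => substC (s (start + i)) (x i)).flatten
  obtain ⟨n, rfl⟩ : ∃ m, n = m + 1 := Nat.exists_eq_succ_of_ne_zero (by
    rintro rfl; exact l.proper.elim fun i _ => i.elim0)
  set v := (List.ofFn fun i => substV (s (start + i)) ((l.idxFun i).map (↑))).flatten
  have hv : ∀ a (ha : a ∈ S), col (substC v a) = c := by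
    intro a ha
    rw [← hc ⟨a, ha⟩]
    congr 1
    simp only [v, substC_flatten, List.map_ofFn, Function.comp_def, substC_substV]
    congr! 3 with i
    rw [Line.coe_apply]
    rcases l.idxFun i with _ | x <;> rfl
  refine ⟨start + (n + 1), by omega, v, ⟨n, (start + ·), _, fun i j hij => by simpa using hij,
    fun i => by simp [Fin.is_le], ?_, ?_, rfl⟩, fun a ha b hb => (hv a ha).trans (hv b hb).symm⟩
  · intro i a hi
    obtain ⟨x, -, rfl⟩ := Option.map_eq_some_iff.1 hi
    exact hSB _ (Nat.le_add_right _ _) x.2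
  · obtain ⟨i, hi⟩ := l.proper
    refine List.mem_flatten.2 ⟨_, List.mem_ofFn.2 ⟨i, rfl⟩, ?_⟩
    simpa [hi, substV_none] using hs (start + i)

theorem exists_varSpan_append_substC_notMem {B : ℕ → Set α} {s : ℕ → List (Option α)}
    {E : Set (List α)} {T S : Finset α} (hTS : T ⊆ S) {start : ℕ}
    (hSB : ∀ j ≥ start, (S : Set α) ⊆ B j) (hs : ∀ j, none ∈ s j)
    (hE : ∀ m, ∀ w ∈ varSpan B s (Set.Iic m), ∃ a ∈ T, substC w a ∉ E)
    (P : Finset (List α)) (hP : ∀ u ∈ P, u ≠ [] → u ∈ constSpan B s (Set.Iio start)) :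
    ∃ M, start < M ∧ ∃ v ∈ varSpan B s (Set.Ico start M),
      ∀ u ∈ P, ∀ a ∈ S, u ++ substC v a ∉ E := by
  obtain ⟨M, hM, v, hv, hcol⟩ :=
    exists_varSpan_substC_mono S hSB hs fun w (u : P) => u.1 ++ w ∈ E
  refine ⟨M, hM, v, hv, fun u hu a ha huE => ?_⟩
  have hvar : u.map some ++ v ∈ varSpan B s (Set.Iic M) := by
    rcases eq_or_ne u [] with rfl | hne
    · exact varSpan_mono (Set.Ico_subset_Iio_self.trans Set.Iio_subset_Iic_self) hv
    · refine varSpan_mono ?_ (map_some_append_mem_varSpan (hP u hu hne) hv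
        fun i hi j hj => lt_of_lt_of_le hi hj.1)
      rw [Set.Iio_union_Ico_eq_Iio hM.le]
      exact Set.Iio_subset_Iic_self
  obtain ⟨b, hb, hbE⟩ := hE M _ hvar
  rw [substC_append, substC_map_some] at hbE
  exact hbE ((congrFun (hcol a ha b (hTS hb)) ⟨u, hu⟩).mp huE)

theorem exists_mem_of_mem_constSpan {B : ℕ → Set α} {t : ℕ → List (Option α)} {I : Set ℕ}
    {P : ℕ → Set (List α)} (hP : Monotone P) (h0 : [] ∈ P 0)
    (hstep : ∀ j, ∀ u ∈ P j, ∀ a ∈ B j, u ++ substC (t j) a ∈ P (j + 1))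
    {z : List α} (hz : z ∈ constSpan B t I) : ∃ N, z ∈ P N := by
  obtain ⟨L, -, hsorted, hc, rfl⟩ := mem_constSpan_iff.1 hz
  clear hz
  suffices ∀ j, ∀ u ∈ P j, (∀ p ∈ L, j ≤ p.1) →
      ∃ N, u ++ (L.map fun p => substC (t p.1) p.2).flatten ∈ P N by
    simpa using this 0 [] h0 fun _ _ => Nat.zero_le _
  induction L with
  | nil => exact fun j u hu _ => ⟨j, by simpa using hu⟩
  | cons p L ih =>
    intro j u hu hj
    rw [List.pairwise_cons] at hsorted
    have hpu := hstep p.1 u (hP (hj p List.mem_cons_self) hu) p.2 (hc p List.mem_cons_self).2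
    obtain ⟨N, hN⟩ := ih hsorted.2 (fun q hq => hc q (List.mem_cons_of_mem _ hq)) _ _ hpu
      hsorted.1
    exact ⟨N, by simpa using hN⟩

/-- `m` is the first index of `s` not used yet, and `P` collects `[]` and the constant words
`t_{l₀}(a₀) ⋯ t_{lᵢ}(aᵢ)` of the words `t₀, …, tₙ₋₁` chosen so far. -/
def IsAvoidingStage (A : ℕ → Finset α) (s : ℕ → List (Option α)) (E : Set (List α))
    (n m : ℕ) (P : Finset (List α)) : Prop :=
  n ≤ m ∧ [] ∈ P ∧
    ∀ u ∈ P, u ≠ [] → u ∈ constSpan (fun j => (A j : Set α)) s (Set.Iio m) ∧ u ∉ E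

theorem IsAvoidingStage.exists_succ [DecidableEq α] {A : ℕ → Finset α} (hA : Monotone A)
    {s : ℕ → List (Option α)} {E : Set (List α)} (hs : ∀ j, none ∈ s j)
    (hE : ∀ m, ∀ w ∈ varSpan (fun j => (A j : Set α)) s (Set.Iic m), ∃ a ∈ A 0, substC w a ∉ E)
    {n m : ℕ} {P : Finset (List α)} (h : IsAvoidingStage A s E n m P) :
    ∃ M, m < M ∧ ∃ v ∈ varSpan (fun j => (A j : Set α)) s (Set.Ico m M),
      IsAvoidingStage A s E (n + 1) M (P ∪ Finset.image₂ (fun u a => u ++ substC v a) P (A n)) := by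
  obtain ⟨hnm, hnil, hP⟩ := h
  obtain ⟨M, hmM, v, hv, hvE⟩ := exists_varSpan_append_substC_notMem (hA (Nat.zero_le n))
    (fun j hj => Finset.coe_subset.2 (hA (hnm.trans hj))) hs hE P fun u hu hne => (hP u hu hne).1
  refine ⟨M, hmM, v, hv, by omega, Finset.mem_union_left _ hnil, fun w hw hne => ?_⟩
  rcases Finset.mem_union.1 hw with hw | hw
  · exact ⟨constSpan_mono (Set.Iio_subset_Iio hmM.le) (hP w hw hne).1, (hP w hw hne).2⟩
  obtain ⟨u, hu, a, ha, rfl⟩ := Finset.mem_image₂.1 hw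
  refine ⟨?_, hvE u hu a ha⟩
  have hva := substC_mem_constSpan hv fun j hj => hA (hnm.trans hj.1) ha
  rcases eq_or_ne u [] with rfl | hu'
  · exact constSpan_mono Set.Ico_subset_Iio_self hva
  · rw [← Set.Iio_union_Ico_eq_Iio hmM.le]
    exact append_mem_constSpan (hP u hu hu').1 hva fun i hi j hj => lt_of_lt_of_le hi hj.1

theorem exists_extracted_forall_constSpan_notMem {A : ℕ → Finset α} (hA : Monotone A)
    {s : ℕ → List (Option α)} {E : Set (List α)} (hs : ∀ j, none ∈ s j)
    (hE : ∀ m, ∀ w ∈ varSpan (fun j => (A j : Set α)) s (Set.Iic m), ∃ a ∈ A 0, substC w a ∉ E) :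
    ∃ t, Extracted (fun j => (A j : Set α)) s t ∧
      ∀ z ∈ constSpan (fun j => (A j : Set α)) t Set.univ, z ∉ E := by
  classical
  choose! M hmM v hv hnext using
    fun n m P (h : IsAvoidingStage A s E n m P) => h.exists_succ hA hs hE
  let stage : ℕ → ℕ × Finset (List α) := fun n => Nat.rec (0, {[]}) (fun n x =>
    (M n x.1 x.2, x.2 ∪ Finset.image₂ (fun u a => u ++ substC (v n x.1 x.2) a) x.2 (A n))) n
  have hstage : ∀ n, IsAvoidingStage A s E n (stage n).1 (stage n).2 := by
    intro n
    induction n with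
    | zero => exact ⟨le_rfl, Finset.mem_singleton_self _,
        fun u hu hne => absurd (Finset.mem_singleton.1 hu) hne⟩
    | succ n ih => exact hnext n _ _ ih
  let t n := v n (stage n).1 (stage n).2
  have ht : ∀ n, t n ∈ varSpan _ s _ := fun n => hv n _ _ (hstage n)
  refine ⟨t, fun _ => ⟨fun n => (stage n).1, rfl,
    strictMono_nat_of_lt_succ fun n => hmM n _ _ (hstage n), fun n _ => ht n⟩, fun z hz hzE => ?_⟩
  obtain ⟨N, hN⟩ := exists_mem_of_mem_constSpan (P := fun n => ((stage n).2 : Set (List α)))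
    (monotone_nat_of_le_succ fun n => Finset.subset_union_left) (Finset.mem_singleton_self _)
    (fun j u hu a ha => Finset.mem_union_right _ (Finset.mem_image₂_of_mem hu ha)) hz
  have hz_ne : z ≠ [] :=
    ne_nil_of_mem_constSpan (fun j => List.ne_nil_of_mem (mem_varSpan_iff.1 (ht j)).1) hz
  exact ((hstage N).2.2 z hN hz_ne).2 hzE

end HJ

open HJ in
theorem stmt13_general {α : Type*} (A : ℕ → Finset α) (hmono : Monotone A)
    (k : ℕ)
    (E : Set (List α))
    (s : ℕ → List (Option α)) (hs : ∀ n, IsVarWord (⋃ n, (A n : Set α)) (s n))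
    (hlarge : IsLarge (fun n => (A (k + n) : Set α)) E s) :
    ∃ (m : ℕ) (w : List (Option α)),
      w ∈ varSpan (fun n => (A (k + n) : Set α)) s (Set.Iic m) ∧
      ∀ a ∈ A k, substC w a ∈ E := by
  by_contra hno
  push Not at hno
  obtain ⟨t, ht, htE⟩ := exists_extracted_forall_constSpan_notMem (A := fun n => A (k + n))
    (fun i j hij => hmono (by omega)) (fun n => (hs n).2) hno
  obtain ⟨z, hzE, hz⟩ := hlarge t ht
  exact htE z hz hzE

open HJ in
/-- Fact 3.8: a `k`-large set contains `{w(a) : a ∈ A_k}` for some variable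
word `w` in the variable span of an initial segment. -/
theorem stmt13 {α : Type*} (A : ℕ → Finset α) (hmono : Monotone A)
    (hne : ∀ n, (A n).Nonempty) (k : ℕ)
    (E : Set (List α)) (hE : E ⊆ WordsOver (⋃ n, (A n : Set α)))
    (s : ℕ → List (Option α)) (hs : ∀ n, IsVarWord (⋃ n, (A n : Set α)) (s n))
    (hlarge : IsLarge (fun n => (A (k + n) : Set α)) E s) :
    ∃ (m : ℕ) (w : List (Option α)),
      w ∈ varSpan (fun n => (A (k + n) : Set α)) s (Set.Iic m) ∧
      ∀ a ∈ A k, substC w a ∈ E :=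
  stmt13_general A hmono k E s hs hlarge
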